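/- arXiv:1103.3524 — 4 statements merged into one kernel-verified Lean document; each statement's English description precedes it below -/
import Mathlib

section
/- The fractional chromatic number of C5 ⊠ K2 equals 5; that is, C5 ⊠ K2 admits a 5:1-coloring, and every a:b-coloring of C5 ⊠ K2 (a, b positive integers) satisfies a ≥ 5b. -/
open SimpleGraph

/-- An `a:b`-coloring of `G`: each vertex gets a set of exactly `b` colors from a palette
of `a` colors, adjacent vertices receive disjoint sets. -/
def IsAbColoring {V : Type*} (G : SimpleGraph V) (a b : ℕ) (c : V → Finset (Fin a)) : Prop :=
  (∀ v, (c v).card = b) ∧ ∀ u v, G.Adj u v → Disjoint (c u) (c v)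

/-- `G` admits an `a:b`-coloring. -/
def HasAbColoring {V : Type*} (G : SimpleGraph V) (a b : ℕ) : Prop :=
  ∃ c : V → Finset (Fin a), IsAbColoring G a b c

/-- The fractional chromatic number of `G`: the infimum of `a/b` over all pairs of
positive integers `(a, b)` such that `G` admits an `a:b`-coloring. -/
noncomputable def fracChromatic {V : Type*} (G : SimpleGraph V) : ℝ :=
  sInf {x : ℝ | ∃ a b : ℕ, 0 < a ∧ 0 < b ∧ x = (a : ℝ) / (b : ℝ) ∧ HasAbColoring G a b}

/-- The maximum degree `Δ(G)` of a finite graph. -/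
noncomputable def maxDeg {V : Type*} [Fintype V] (G : SimpleGraph V) : ℕ := by
  classical exact G.maxDegree

/-- The clique number `ω(G)`: the largest cardinality of a clique in `G`. -/
noncomputable def cliqueNum' {V : Type*} (G : SimpleGraph V) : ℕ :=
  sSup {n | ∃ s : Finset V, G.IsNClique n s}

/-- The square of the 8-cycle: vertices `ZMod 8`, distinct `i, j` adjacent iff
`i - j ∈ {1, -1, 2, -2}`. -/
def C8sq : SimpleGraph (ZMod 8) :=
  SimpleGraph.fromRel (fun i j => i - j = 1 ∨ i - j = 2)

/-- The strong product `C5 ⊠ K2`: vertices `ZMod 5 × Fin 2`, distinct `(i,x), (j,y)`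
adjacent iff `i - j ∈ {0, 1, -1}`. -/
def C5K2 : SimpleGraph (ZMod 5 × Fin 2) :=
  SimpleGraph.fromRel (fun p q => p.1 - q.1 = 0 ∨ p.1 - q.1 = 1)

/-- The strong product `C_{2l+1} ⊠ K2`: vertices `ZMod (2l+1) × Fin 2`,
distinct `(i,x), (j,y)` adjacent iff `i - j ∈ {0, 1, -1}`. -/
def CnK2 (l : ℕ) : SimpleGraph (ZMod (2 * l + 1) × Fin 2) :=
  SimpleGraph.fromRel (fun p q => p.1 - q.1 = 0 ∨ p.1 - q.1 = 1)

/-- The cycle of length `n` on `ZMod n`: distinct `i, j` adjacent iff `i - j = ±1`. -/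
def cycleGraph' (n : ℕ) : SimpleGraph (ZMod n) :=
  SimpleGraph.fromRel (fun i j => i - j = 1)

/-- `f(k)`: the infimum of `Δ(G) - χ_f(G)` over all finite connected simple graphs `G`
with `Δ(G) = k`, `ω(G) ≤ k - 1`, `G` not isomorphic to `C8²` nor to `C5 ⊠ K2`. -/
noncomputable def fdef (k : ℕ) : ℝ :=
  sInf {x : ℝ | ∃ (n : ℕ) (G : SimpleGraph (Fin n)),
    G.Connected ∧ maxDeg G = k ∧ cliqueNum' G ≤ k - 1 ∧
    ¬ Nonempty (G ≃g C8sq) ∧ ¬ Nonempty (G ≃g C5K2) ∧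
    x = (maxDeg G : ℝ) - fracChromatic G}


lemma c5k2_adj_iff (u v : ZMod 5 × Fin 2) : C5K2.Adj u v ↔
    u ≠ v ∧ ((u.1 - v.1 = 0 ∨ u.1 - v.1 = 1) ∨ (v.1 - u.1 = 0 ∨ v.1 - u.1 = 1)) :=
  SimpleGraph.fromRel_adj _ u v

set_option maxRecDepth 10000 in
set_option synthInstance.maxHeartbeats 1000000 in
set_option synthInstance.maxSize 1000 in
lemma c5k2_triple : ∀ u v w : ZMod 5 × Fin 2, u ≠ v → u ≠ w → v ≠ w →
    C5K2.Adj u v ∨ C5K2.Adj u w ∨ C5K2.Adj v w := by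
  simp only [c5k2_adj_iff]
  decide

set_option maxRecDepth 10000 in
set_option synthInstance.maxHeartbeats 1000000 in
set_option synthInstance.maxSize 1000 in
lemma c5k2_color : HasAbColoring C5K2 5 1 := by
  refine ⟨fun p => {(2 * p.1 + (p.2.val : ZMod 5) : ZMod 5)}, fun v => rfl, ?_⟩
  simp only [c5k2_adj_iff]
  decide

/-- `χ_f(C5 ⊠ K2) = 5`: `C5 ⊠ K2` admits a `5:1`-coloring and every `a:b`-coloring
satisfies `a ≥ 5b`. -/
theorem stmt_4 :
    HasAbColoring C5K2 5 1 ∧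
    ∀ a b : ℕ, 0 < a → 0 < b → HasAbColoring C5K2 a b → 5 * b ≤ a := by
  classical
  refine ⟨c5k2_color, ?_⟩
  rintro a b ha hb ⟨c, hcard, hdisj⟩
  -- each color class is an independent set, hence has at most 2 vertices
  have hfib : ∀ k : Fin a,
      (Finset.univ.filter (fun v : ZMod 5 × Fin 2 => k ∈ c v)).card ≤ 2 := by
    intro k
    by_contra h
    push_neg at h
    obtain ⟨u, hu, v, hv, w, hw, huv, huw, hvw⟩ := Finset.two_lt_card.mp h
    simp only [Finset.mem_filter] at hu hv hw
    have key : ∀ x y : ZMod 5 × Fin 2, k ∈ c x → k ∈ c y → ¬ C5K2.Adj x y := by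
      intro x y hx hy hadj
      exact (Finset.disjoint_left.mp (hdisj x y hadj)) hx hy
    rcases c5k2_triple u v w huv huw hvw with h' | h' | h'
    · exact key u v hu.2 hv.2 h'
    · exact key u w hu.2 hw.2 h'
    · exact key v w hv.2 hw.2 h'
  -- double counting
  have hcount : (∑ v : ZMod 5 × Fin 2, (c v).card)
      = ∑ k : Fin a, (Finset.univ.filter (fun v : ZMod 5 × Fin 2 => k ∈ c v)).card := by
    simp only [Finset.card_filter]
    rw [Finset.sum_comm]
    congr 1
    ext v
    rw [← Finset.card_filter]
    congr 1
    exact (Finset.filter_mem_eq_inter.trans (by simp)).symm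
  have h10 : (∑ v : ZMod 5 × Fin 2, (c v).card) = 10 * b := by
    simp [hcard, Finset.sum_const, Finset.card_univ]
  have hle : (∑ k : Fin a, (Finset.univ.filter
      (fun v : ZMod 5 × Fin 2 => k ∈ c v)).card) ≤ 2 * a := by
    calc _ ≤ ∑ _k : Fin a, 2 := Finset.sum_le_sum fun k _ => hfib k
    _ = 2 * a := by simp [Finset.sum_const, Finset.card_univ, Nat.mul_comm]
  omega
end

section
/- For every integer l ≥ 2, the fractional chromatic number of C_{2l+1} ⊠ K2 equals 4 + 2/l. -/
open SimpleGraph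

section AuxStmt5
open Finset

lemma cnk2_adj (l : ℕ) (p q : ZMod (2*l+1) × Fin 2) :
    (CnK2 l).Adj p q ↔ p ≠ q ∧ (p.1 - q.1 = 0 ∨ p.1 - q.1 = 1 ∨ q.1 - p.1 = 1) := by
  have h0 : q.1 - p.1 = 0 ↔ p.1 - q.1 = 0 := by rw [sub_eq_zero, sub_eq_zero]; exact eq_comm
  simp only [CnK2, fromRel_adj]
  tauto

lemma indep_bound (l : ℕ) (hl : 2 ≤ l) (S : Finset (ZMod (2*l+1) × Fin 2))
    (hS : ∀ u ∈ S, ∀ v ∈ S, ¬ (CnK2 l).Adj u v) : S.card ≤ l := by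
  classical
  set T : Finset (ZMod (2*l+1)) := S.image Prod.fst with hT
  have hcard : T.card = S.card := by
    apply Finset.card_image_of_injOn
    intro u hu v hv h1
    by_contra hne
    exact hS u hu v hv ((cnk2_adj l u v).2 ⟨hne, Or.inl (by rw [h1, sub_self])⟩)
  -- T and T+1 are disjoint
  have hdisj : Disjoint T (T.image (· + 1)) := by
    rw [Finset.disjoint_left]
    rintro z hz hz'
    simp only [Finset.mem_image, hT] at hz hz'
    obtain ⟨u, hu, hu1⟩ := hz
    obtain ⟨t, ⟨v, hv, hv1⟩, rfl⟩ := hz'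
    have hne : u ≠ v := by
      intro h; rw [h, hv1] at hu1
      have : (1 : ZMod (2*l+1)) = 0 := by
        have := congrArg (· - v.1) hu1
        simpa using this.symm
      have h2 : ((1:ℕ) : ZMod (2*l+1)) = ((0:ℕ) : ZMod (2*l+1)) := by push_cast; exact this
      have := (ZMod.natCast_eq_natCast_iff' 1 0 (2*l+1)).1 h2
      simp at this
      omega
    exact hS u hu v hv ((cnk2_adj l u v).2 ⟨hne, Or.inr (Or.inl (by rw [hu1, hv1]; ring))⟩)
  have hcard1 : (T.image (· + 1)).card = T.card :=
    Finset.card_image_of_injective _ (add_left_injective 1)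
  have hle : T.card + T.card ≤ 2*l+1 := by
    calc T.card + T.card = (T ∪ T.image (· + 1)).card := by
          rw [Finset.card_union_of_disjoint hdisj, hcard1]
        _ ≤ Fintype.card (ZMod (2*l+1)) := Finset.card_le_univ _
        _ = 2*l+1 := ZMod.card _
  omega

lemma lower_count (l a b : ℕ) (hl : 2 ≤ l) (h : HasAbColoring (CnK2 l) a b) :
    (4*l+2)*b ≤ a*l := by
  classical
  obtain ⟨c, hc1, hc2⟩ := h
  have key : ∑ k : Fin a, (univ.filter (fun v => k ∈ c v)).card
      = ∑ v : ZMod (2*l+1) × Fin 2, (c v).card := by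
    simp only [Finset.card_filter]
    rw [Finset.sum_comm]
    congr 1; ext v
    rw [Finset.sum_ite_mem, Finset.univ_inter, Finset.sum_const, smul_eq_mul, mul_one]
  have hcardV : Fintype.card (ZMod (2*l+1) × Fin 2) = (2*l+1)*2 := by simp [ZMod.card]
  have hsum : ∑ v : ZMod (2*l+1) × Fin 2, (c v).card = (4*l+2)*b := by
    simp only [hc1, Finset.sum_const, smul_eq_mul, Finset.card_univ, hcardV]
    ring
  have hbound : ∀ k : Fin a, (univ.filter (fun v => k ∈ c v)).card ≤ l := by
    intro k
    apply indep_bound l hl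
    intro u hu v hv hadj
    simp only [Finset.mem_filter] at hu hv
    exact Finset.disjoint_left.1 (hc2 u v hadj) hu.2 hv.2
  calc (4*l+2)*b = ∑ k : Fin a, (univ.filter (fun v => k ∈ c v)).card := by rw [key, hsum]
    _ ≤ ∑ _k : Fin a, l := Finset.sum_le_sum (fun k _ => hbound k)
    _ = a * l := by simp [mul_comm]

/-- the color value -/
def colv (l : ℕ) (p : ZMod (2*l+1) × Fin 2) (a : Fin l) : ℕ :=
  (p.1 * (l : ZMod (2*l+1)) + ((a : ℕ) : ZMod (2*l+1))).val + p.2.val * (2*l+1)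

lemma colv_lt (l : ℕ) (p : ZMod (2*l+1) × Fin 2) (a : Fin l) : colv l p a < 4*l+2 := by
  have h1 := ZMod.val_lt (p.1 * (l : ZMod (2*l+1)) + ((a : ℕ) : ZMod (2*l+1)))
  have h2 : p.2.val < 2 := p.2.isLt
  unfold colv
  rcases (by omega : p.2.val = 0 ∨ p.2.val = 1) with h | h <;> rw [h] <;> omega

lemma has_coloring (l : ℕ) (hl : 2 ≤ l) : HasAbColoring (CnK2 l) (4*l+2) l := by
  classical
  refine ⟨fun p => (univ : Finset (Fin l)).image (fun a => ⟨colv l p a, colv_lt l p a⟩), ?_, ?_⟩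
  · -- card = l
    intro p
    rw [Finset.card_image_of_injective, Finset.card_univ, Fintype.card_fin]
    intro a b hab
    have h1 : colv l p a = colv l p b := congrArg Fin.val hab
    unfold colv at h1
    have h2 : (p.1 * (l : ZMod (2*l+1)) + ((a : ℕ) : ZMod (2*l+1))).val
        = (p.1 * (l : ZMod (2*l+1)) + ((b : ℕ) : ZMod (2*l+1))).val := by omega
    have h3 := ZMod.val_injective _ h2
    have h4 : ((a : ℕ) : ZMod (2*l+1)) = ((b : ℕ) : ZMod (2*l+1)) := by
      exact add_left_cancel h3
    have h5 := congrArg ZMod.val h4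
    rw [ZMod.val_cast_of_lt (by omega : (a:ℕ) < 2*l+1),
        ZMod.val_cast_of_lt (by omega : (b:ℕ) < 2*l+1)] at h5
    exact Fin.ext h5
  · -- disjoint on adjacent
    intro u v hadj
    rw [cnk2_adj] at hadj
    obtain ⟨hne, hrel⟩ := hadj
    rw [Finset.disjoint_left]
    rintro x hx hx'
    simp only [Finset.mem_image, Finset.mem_univ, true_and] at hx hx'
    obtain ⟨a, ha⟩ := hx
    obtain ⟨b, hb⟩ := hx'
    have heq : colv l u a = colv l v b := by
      have := ha.trans hb.symm
      exact congrArg Fin.val this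
    unfold colv at heq
    have hva := ZMod.val_lt (u.1 * (l : ZMod (2*l+1)) + ((a : ℕ) : ZMod (2*l+1)))
    have hvb := ZMod.val_lt (v.1 * (l : ZMod (2*l+1)) + ((b : ℕ) : ZMod (2*l+1)))
    have hu2 : u.2.val < 2 := u.2.isLt
    have hv2 : v.2.val < 2 := v.2.isLt
    -- deduce same layer and equal vals
    have hsame : u.2.val = v.2.val ∧
        (u.1 * (l : ZMod (2*l+1)) + ((a : ℕ) : ZMod (2*l+1))).val
          = (v.1 * (l : ZMod (2*l+1)) + ((b : ℕ) : ZMod (2*l+1))).val := by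
      rcases (by omega : u.2.val = 0 ∨ u.2.val = 1) with h | h <;>
        rcases (by omega : v.2.val = 0 ∨ v.2.val = 1) with h' | h' <;>
        rw [h, h'] at heq ⊢ <;> omega
    have h22 : u.2 = v.2 := Fin.ext hsame.1
    have hzeq : u.1 * (l : ZMod (2*l+1)) + ((a : ℕ) : ZMod (2*l+1))
        = v.1 * (l : ZMod (2*l+1)) + ((b : ℕ) : ZMod (2*l+1)) := ZMod.val_injective _ hsame.2
    rcases hrel with h | h | h
    · -- same first coordinate: u = v contradiction
      rw [sub_eq_zero] at h
      exact hne (Prod.ext h h22)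
    · -- u.1 = v.1 + 1
      have hu1 : u.1 = v.1 + 1 := by linear_combination h
      rw [hu1] at hzeq
      have hkey : (((l + a : ℕ)) : ZMod (2*l+1)) = (((b:ℕ)) : ZMod (2*l+1)) := by
        push_cast
        linear_combination hzeq
      have h5 := congrArg ZMod.val hkey
      rw [ZMod.val_cast_of_lt (by omega : (l + (a:ℕ)) < 2*l+1),
          ZMod.val_cast_of_lt (by omega : (b:ℕ) < 2*l+1)] at h5
      omega
    · -- v.1 = u.1 + 1
      have hv1 : v.1 = u.1 + 1 := by linear_combination h
      rw [hv1] at hzeq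
      have hkey : (((a : ℕ)) : ZMod (2*l+1)) = (((l + b : ℕ)) : ZMod (2*l+1)) := by
        push_cast
        linear_combination hzeq
      have h5 := congrArg ZMod.val hkey
      rw [ZMod.val_cast_of_lt (by omega : (a:ℕ) < 2*l+1),
          ZMod.val_cast_of_lt (by omega : (l + (b:ℕ)) < 2*l+1)] at h5
      omega

end AuxStmt5

/-- For every integer `l ≥ 2`, `χ_f(C_{2l+1} ⊠ K2) = 4 + 2/l`. -/
theorem stmt_5 (l : ℕ) (hl : 2 ≤ l) :
    fracChromatic (CnK2 l) = 4 + 2 / (l : ℝ) := by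
  have hlR : (0:ℝ) < (l:ℝ) := by exact_mod_cast (by omega : 0 < l)
  have hval : (4:ℝ) + 2/(l:ℝ) = ((4*l+2 : ℕ) : ℝ) / ((l:ℕ) : ℝ) := by
    push_cast
    field_simp
  have hmem : ((4*l+2 : ℕ) : ℝ) / ((l:ℕ) : ℝ) ∈
      {x : ℝ | ∃ a b : ℕ, 0 < a ∧ 0 < b ∧ x = (a : ℝ) / (b : ℝ) ∧ HasAbColoring (CnK2 l) a b} :=
    ⟨4*l+2, l, by omega, by omega, rfl, has_coloring l hl⟩
  have hlb : ∀ x ∈ {x : ℝ | ∃ a b : ℕ, 0 < a ∧ 0 < b ∧ x = (a : ℝ) / (b : ℝ) ∧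
      HasAbColoring (CnK2 l) a b}, (4:ℝ) + 2/(l:ℝ) ≤ x := by
    rintro x ⟨a, b, ha, hb, rfl, hcol⟩
    have hbR : (0:ℝ) < (b:ℝ) := by exact_mod_cast hb
    have hcount := lower_count l a b hl hcol
    rw [hval, div_le_div_iff₀ hlR hbR]
    exact_mod_cast hcount
  unfold fracChromatic
  apply le_antisymm
  · exact csInf_le ⟨(4:ℝ) + 2/(l:ℝ), hlb⟩ (hval ▸ hmem)
  · exact le_csInf ⟨_, hmem⟩ hlb
end

section
/- Let G be a finite simple graph and let A, B be sets of vertices with A ∪ B = V(G), A ∩ B = {u, v} for two distinct vertices u, v, and such that every edge of G has both endpoints in A or both endpoints in B. If uv is an edge of G, then χ_f(G) = max{χ_f(G[A]), χ_f(G[B])}, where G[A] and G[B] denote the induced subgraphs of G on A and on B. -/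
open SimpleGraph

section AuxFracChromatic

open Finset

lemma frac_set_nonempty' {W : Type*} [Finite W] (G : SimpleGraph W) :
    {x : ℝ | ∃ a b : ℕ, 0 < a ∧ 0 < b ∧ x = (a : ℝ) / (b : ℝ) ∧ HasAbColoring G a b}.Nonempty := by
  classical
  haveI := Fintype.ofFinite W
  have e : W ≃ Fin (Nat.card W) := by
    rw [Nat.card_eq_fintype_card]; exact Fintype.equivFin W
  refine ⟨_, Nat.card W + 1, 1, Nat.succ_pos _, Nat.one_pos, rfl,
    ⟨fun x => {(e x).castSucc}, fun x => Finset.card_singleton _, fun x y hxy => ?_⟩⟩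
  rw [Finset.disjoint_singleton]
  intro h
  exact hxy.ne (e.injective (Fin.castSucc_injective _ h))

lemma frac_set_bddBelow' {W : Type*} (G : SimpleGraph W) :
    BddBelow {x : ℝ | ∃ a b : ℕ, 0 < a ∧ 0 < b ∧ x = (a : ℝ) / (b : ℝ) ∧ HasAbColoring G a b} := by
  refine ⟨0, fun x hx => ?_⟩
  obtain ⟨a, b, ha, hb, rfl, -⟩ := hx
  positivity

lemma hasAb_induce' {V : Type*} (G : SimpleGraph V) (A : Set V) {a b : ℕ}
    (h : HasAbColoring G a b) : HasAbColoring (G.induce A) a b := by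
  obtain ⟨c, hc, hadj⟩ := h
  exact ⟨fun x => c x.1, fun x => hc x.1, fun x y hxy => hadj x.1 y.1 hxy⟩

lemma hasAb_blowup' {V : Type*} (G : SimpleGraph V) {a b : ℕ} (k : ℕ)
    (h : HasAbColoring G a b) : HasAbColoring G (a * k) (b * k) := by
  classical
  obtain ⟨c, hc, hadj⟩ := h
  refine ⟨fun x => (c x ×ˢ (Finset.univ : Finset (Fin k))).image finProdFinEquiv,
    fun x => ?_, fun x y hxy => ?_⟩
  · rw [Finset.card_image_of_injective _ finProdFinEquiv.injective,
      Finset.card_product, hc, Finset.card_univ, Fintype.card_fin]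
  · rw [Finset.disjoint_image finProdFinEquiv.injective]
    rw [Finset.disjoint_left]
    intro p hp hq
    rw [Finset.mem_product] at hp hq
    exact Finset.disjoint_left.mp (hadj x y hxy) hp.1 hq.1

lemma hasAb_pad' {V : Type*} (G : SimpleGraph V) {a a' b : ℕ} (hle : a ≤ a')
    (h : HasAbColoring G a b) : HasAbColoring G a' b := by
  classical
  obtain ⟨c, hc, hadj⟩ := h
  refine ⟨fun x => (c x).image (Fin.castLE hle), fun x => ?_, fun x y hxy => ?_⟩
  · rw [Finset.card_image_of_injective _ (Fin.castLE_injective hle), hc]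
  · rw [Finset.disjoint_image (Fin.castLE_injective hle)]
    exact hadj x y hxy

lemma perm_two_sets' {N : ℕ} (s₁ s₂ t₁ t₂ : Finset (Fin N))
    (hs : Disjoint s₁ s₂) (ht : Disjoint t₁ t₂)
    (h1 : s₁.card = t₁.card) (h2 : s₂.card = t₂.card) :
    ∃ π : Fin N → Fin N, Function.Injective π ∧
      s₁.image π = t₁ ∧ s₂.image π = t₂ := by
  classical
  have hcs : ((s₁ ∪ s₂)ᶜ : Finset (Fin N)).card = ((t₁ ∪ t₂)ᶜ : Finset (Fin N)).card := by
    rw [Finset.card_compl, Finset.card_compl,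
      Finset.card_union_of_disjoint hs, Finset.card_union_of_disjoint ht, h1, h2]
  have e₁ : (s₁ : Finset (Fin N)) ≃ (t₁ : Finset (Fin N)) :=
    Fintype.equivOfCardEq (by rw [Fintype.card_coe, Fintype.card_coe]; exact h1)
  have e₂ : (s₂ : Finset (Fin N)) ≃ (t₂ : Finset (Fin N)) :=
    Fintype.equivOfCardEq (by rw [Fintype.card_coe, Fintype.card_coe]; exact h2)
  have e₃ : ((s₁ ∪ s₂)ᶜ : Finset (Fin N)) ≃ ((t₁ ∪ t₂)ᶜ : Finset (Fin N)) :=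
    Fintype.equivOfCardEq (by rw [Fintype.card_coe, Fintype.card_coe]; exact hcs)
  set f : Fin N → Fin N := fun x =>
    if h : x ∈ s₁ then (e₁ ⟨x, h⟩ : Fin N)
    else if h2 : x ∈ s₂ then (e₂ ⟨x, h2⟩ : Fin N)
    else (e₃ ⟨x, by simp [Finset.mem_compl, Finset.mem_union, h, h2]⟩ : Fin N) with hf
  have hmem1 : ∀ x (h : x ∈ s₁), f x ∈ t₁ := by
    intro x h; simp only [hf, dif_pos h]; exact (e₁ ⟨x, h⟩).2
  have hmem2 : ∀ x (h : x ∈ s₂), f x ∈ t₂ := by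
    intro x h
    have hx1 : x ∉ s₁ := fun hx => (Finset.disjoint_left.mp hs) hx h
    simp only [hf, dif_neg hx1, dif_pos h]; exact (e₂ ⟨x, h⟩).2
  have hmem3 : ∀ x, x ∉ s₁ → x ∉ s₂ → f x ∈ (t₁ ∪ t₂)ᶜ := by
    intro x hx1 hx2
    simp only [hf, dif_neg hx1, dif_neg hx2]
    exact (e₃ _).2
  have hinj : Function.Injective f := by
    intro x y hxy
    by_cases hx1 : x ∈ s₁
    · by_cases hy1 : y ∈ s₁
      · have h' := hxy
        simp only [hf, dif_pos hx1, dif_pos hy1] at h'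
        exact congrArg Subtype.val (e₁.injective (Subtype.ext h'))
      · exfalso
        by_cases hy2 : y ∈ s₂
        · exact Finset.disjoint_left.mp ht (hxy ▸ hmem1 x hx1) (hmem2 y hy2)
        · exact (Finset.mem_compl.mp (hxy ▸ hmem3 y hy1 hy2))
            (Finset.mem_union_left _ (hmem1 x hx1))
    · by_cases hx2 : x ∈ s₂
      · by_cases hy1 : y ∈ s₁
        · exact absurd (hxy ▸ hmem2 x hx2)
            (fun h => Finset.disjoint_right.mp ht h (hmem1 y hy1))
        · by_cases hy2 : y ∈ s₂
          · have h' := hxy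
            simp only [hf, dif_neg hx1, dif_pos hx2, dif_neg hy1, dif_pos hy2] at h'
            exact congrArg Subtype.val (e₂.injective (Subtype.ext h'))
          · exact absurd (hxy ▸ hmem3 y hy1 hy2)
              (fun h => (Finset.mem_compl.mp h) (Finset.mem_union_right _ (hmem2 x hx2)))
      · by_cases hy1 : y ∈ s₁
        · exact absurd (hxy ▸ hmem3 x hx1 hx2)
            (fun h => (Finset.mem_compl.mp h) (Finset.mem_union_left _ (hmem1 y hy1)))
        · by_cases hy2 : y ∈ s₂
          · exact absurd (hxy ▸ hmem3 x hx1 hx2)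
              (fun h => (Finset.mem_compl.mp h) (Finset.mem_union_right _ (hmem2 y hy2)))
          · have h' := hxy
            simp only [hf, dif_neg hx1, dif_neg hx2, dif_neg hy1, dif_neg hy2] at h'
            exact congrArg Subtype.val (e₃.injective (Subtype.ext h'))
  refine ⟨f, hinj, ?_, ?_⟩
  · apply Finset.eq_of_subset_of_card_le
    · intro y hy
      rcases Finset.mem_image.mp hy with ⟨x, hx, rfl⟩
      exact hmem1 x hx
    · rw [Finset.card_image_of_injective _ hinj, h1]
  · apply Finset.eq_of_subset_of_card_le
    · intro y hy
      rcases Finset.mem_image.mp hy with ⟨x, hx, rfl⟩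
      exact hmem2 x hx
    · rw [Finset.card_image_of_injective _ hinj, h2]

lemma combine' {V : Type*} (G : SimpleGraph V) (A B : Set V) (u v : V)
    (hUnion : A ∪ B = Set.univ) (hInter : A ∩ B = {u, v})
    (hedge : ∀ x y, G.Adj x y → (x ∈ A ∧ y ∈ A) ∨ (x ∈ B ∧ y ∈ B))
    (hadj : G.Adj u v) {N M : ℕ}
    (hA : HasAbColoring (G.induce A) N M) (hB : HasAbColoring (G.induce B) N M) :
    HasAbColoring G N M := by
  classical
  obtain ⟨cA, hcA, hcAadj⟩ := hA
  obtain ⟨cB, hcB, hcBadj⟩ := hB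
  have hu : u ∈ A ∩ B := by rw [hInter]; exact Set.mem_insert _ _
  have hv : v ∈ A ∩ B := by rw [hInter]; exact Set.mem_insert_of_mem _ rfl
  set uA : A := ⟨u, hu.1⟩
  set vA : A := ⟨v, hv.1⟩
  set uB : B := ⟨u, hu.2⟩
  set vB : B := ⟨v, hv.2⟩
  have hadjA : (G.induce A).Adj uA vA := hadj
  have hadjB : (G.induce B).Adj uB vB := hadj
  obtain ⟨π, hπinj, hπ1, hπ2⟩ := perm_two_sets' (cB uB) (cB vB) (cA uA) (cA vA)
    (hcBadj _ _ hadjB) (hcAadj _ _ hadjA) (by rw [hcB, hcA]) (by rw [hcB, hcA])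
  set cB' : B → Finset (Fin N) := fun x => (cB x).image π with hcB'def
  set c : V → Finset (Fin N) := fun x =>
    if hx : x ∈ A then cA ⟨x, hx⟩
    else cB' ⟨x, (by
      have hx' : x ∈ A ∪ B := by rw [hUnion]; trivial
      exact hx'.resolve_left hx)⟩ with hcdef
  have hAval : ∀ x (hx : x ∈ A), c x = cA ⟨x, hx⟩ := fun x hx => dif_pos hx
  have hBval : ∀ x (hx : x ∈ B), c x = cB' ⟨x, hx⟩ := by
    intro x hx
    by_cases hxA : x ∈ A
    · have hmem : x ∈ ({u, v} : Set V) := by rw [← hInter]; exact ⟨hxA, hx⟩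
      rw [hAval x hxA]
      rcases hmem with rfl | hmem
      · exact hπ1.symm
      · have : x = v := hmem
        subst this
        exact hπ2.symm
    · simp only [hcdef, dif_neg hxA]
  refine ⟨c, fun x => ?_, fun x y hxy => ?_⟩
  · by_cases hx : x ∈ A
    · rw [hAval x hx]; exact hcA _
    · have hxB : x ∈ B := by
        have hx' : x ∈ A ∪ B := by rw [hUnion]; trivial
        exact hx'.resolve_left hx
      rw [hBval x hxB, hcB'def]
      simp only
      rw [Finset.card_image_of_injective _ hπinj]
      exact hcB _
  · rcases hedge x y hxy with ⟨hx, hy⟩ | ⟨hx, hy⟩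
    · rw [hAval x hx, hAval y hy]
      exact hcAadj ⟨x, hx⟩ ⟨y, hy⟩ hxy
    · rw [hBval x hx, hBval y hy, hcB'def]
      simp only
      rw [Finset.disjoint_image hπinj]
      exact hcBadj ⟨x, hx⟩ ⟨y, hy⟩ hxy

/-- One-sided combination bound. -/
lemma frac_le_of_colorings {V : Type*} (G : SimpleGraph V) (A B : Set V) (u v : V)
    (hUnion : A ∪ B = Set.univ) (hInter : A ∩ B = {u, v})
    (hedge : ∀ x y, G.Adj x y → (x ∈ A ∧ y ∈ A) ∨ (x ∈ B ∧ y ∈ B))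
    (hadj : G.Adj u v) {a b a' b' : ℕ}
    (ha : 0 < a) (hb : 0 < b) (ha' : 0 < a') (hb' : 0 < b')
    (hA : HasAbColoring (G.induce A) a b) (hB : HasAbColoring (G.induce B) a' b')
    (hle : (a' : ℝ) / (b' : ℝ) ≤ (a : ℝ) / (b : ℝ)) :
    fracChromatic G ≤ (a : ℝ) / (b : ℝ) := by
  have hle' : a' * b ≤ a * b' := by
    rw [div_le_div_iff₀ (by exact_mod_cast hb') (by exact_mod_cast hb)] at hle
    exact_mod_cast hle
  have cA2 : HasAbColoring (G.induce A) (a * b') (b * b') := hasAb_blowup' _ b' hA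
  have cB2 : HasAbColoring (G.induce B) (a * b') (b * b') := by
    have h1 : HasAbColoring (G.induce B) (a' * b) (b' * b) := hasAb_blowup' _ b hB
    rw [mul_comm b' b] at h1
    exact hasAb_pad' _ hle' h1
  have hG : HasAbColoring G (a * b') (b * b') :=
    combine' G A B u v hUnion hInter hedge hadj cA2 cB2
  have hmem : ((a * b' : ℕ) : ℝ) / ((b * b' : ℕ) : ℝ) ∈
      {x : ℝ | ∃ a b : ℕ, 0 < a ∧ 0 < b ∧ x = (a : ℝ) / (b : ℝ) ∧ HasAbColoring G a b} :=
    ⟨a * b', b * b', Nat.mul_pos ha hb', Nat.mul_pos hb hb', rfl, hG⟩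
  have heq : ((a * b' : ℕ) : ℝ) / ((b * b' : ℕ) : ℝ) = (a : ℝ) / (b : ℝ) := by
    push_cast
    rw [mul_div_mul_right _ _ (by exact_mod_cast hb'.ne' : (b' : ℝ) ≠ 0)]
  calc fracChromatic G ≤ ((a * b' : ℕ) : ℝ) / ((b * b' : ℕ) : ℝ) :=
        csInf_le (frac_set_bddBelow' G) hmem
    _ = (a : ℝ) / (b : ℝ) := heq

end AuxFracChromatic

/-- Cut lemma, edge case: if `A ∪ B = V(G)`, `A ∩ B = {u, v}`, every edge of `G` lies within
`A` or within `B`, and `uv ∈ E(G)`, then `χ_f(G) = max {χ_f(G[A]), χ_f(G[B])}`. -/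
theorem stmt_13 {V : Type*} [Fintype V] (G : SimpleGraph V) (A B : Set V) (u v : V)
    (huv : u ≠ v) (hUnion : A ∪ B = Set.univ) (hInter : A ∩ B = {u, v})
    (hedge : ∀ x y, G.Adj x y → (x ∈ A ∧ y ∈ A) ∨ (x ∈ B ∧ y ∈ B))
    (hadj : G.Adj u v) :
    fracChromatic G = max (fracChromatic (G.induce A)) (fracChromatic (G.induce B)) := by
  classical
  haveI : Finite V := Finite.of_fintype V
  have hSGne := frac_set_nonempty' G
  have hSAne := frac_set_nonempty' (G.induce A)
  have hSBne := frac_set_nonempty' (G.induce B)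
  -- swapped hypotheses
  have hUnion2 : B ∪ A = Set.univ := by rw [Set.union_comm]; exact hUnion
  have hInter2 : B ∩ A = {u, v} := by rw [Set.inter_comm]; exact hInter
  have hedge2 : ∀ x y, G.Adj x y → (x ∈ B ∧ y ∈ B) ∨ (x ∈ A ∧ y ∈ A) :=
    fun x y h => (hedge x y h).symm
  -- lower bound: restrictions
  have h1 : fracChromatic (G.induce A) ≤ fracChromatic G := by
    apply csInf_le_csInf (frac_set_bddBelow' _) hSGne
    rintro x ⟨a, b, ha, hb, rfl, hcol⟩
    exact ⟨a, b, ha, hb, rfl, hasAb_induce' G A hcol⟩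
  have h2 : fracChromatic (G.induce B) ≤ fracChromatic G := by
    apply csInf_le_csInf (frac_set_bddBelow' _) hSGne
    rintro x ⟨a, b, ha, hb, rfl, hcol⟩
    exact ⟨a, b, ha, hb, rfl, hasAb_induce' G B hcol⟩
  refine le_antisymm ?_ (max_le h1 h2)
  -- key pointwise bound
  have key : ∀ x ∈ {x : ℝ | ∃ a b : ℕ, 0 < a ∧ 0 < b ∧ x = (a : ℝ) / (b : ℝ) ∧
        HasAbColoring (G.induce A) a b},
      ∀ y ∈ {x : ℝ | ∃ a b : ℕ, 0 < a ∧ 0 < b ∧ x = (a : ℝ) / (b : ℝ) ∧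
        HasAbColoring (G.induce B) a b},
      fracChromatic G ≤ max x y := by
    rintro x ⟨a, b, ha, hb, rfl, hcolA⟩ y ⟨a', b', ha', hb', rfl, hcolB⟩
    rcases le_total ((a' : ℝ) / (b' : ℝ)) ((a : ℝ) / (b : ℝ)) with hle | hle
    · exact le_trans (frac_le_of_colorings G A B u v hUnion hInter hedge hadj
        ha hb ha' hb' hcolA hcolB hle) (le_max_left _ _)
    · exact le_trans (frac_le_of_colorings G B A u v hUnion2 hInter2 hedge2 hadj
        ha' hb' ha hb hcolB hcolA hle) (le_max_right _ _)
  -- epsilon argument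
  have heps : ∀ ε : ℝ, 0 < ε →
      fracChromatic G ≤ max (fracChromatic (G.induce A)) (fracChromatic (G.induce B)) + ε := by
    intro ε hε
    obtain ⟨x, hx, hxlt⟩ := exists_lt_of_csInf_lt hSAne
      (lt_add_of_pos_right (fracChromatic (G.induce A)) hε)
    obtain ⟨y, hy, hylt⟩ := exists_lt_of_csInf_lt hSBne
      (lt_add_of_pos_right (fracChromatic (G.induce B)) hε)
    refine le_trans (key x hx y hy) (max_le ?_ ?_)
    · refine le_trans hxlt.le ?_
      have := le_max_left (fracChromatic (G.induce A)) (fracChromatic (G.induce B))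
      linarith
    · refine le_trans hylt.le ?_
      have := le_max_right (fracChromatic (G.induce A)) (fracChromatic (G.induce B))
      linarith
  by_contra hcon
  push_neg at hcon
  have := heps ((fracChromatic G -
    max (fracChromatic (G.induce A)) (fracChromatic (G.induce B))) / 2) (by linarith)
  linarith
end

section
/- Let G be a finite simple graph and let A, B be sets of vertices with A ∪ B = V(G), A ∩ B = {u, v} for two distinct vertices u, v, and such that every edge of G has both endpoints in A or both endpoints in B. If uv is not an edge of G, then χ_f(G) ≤ max{χ_f(G[A]), χ_f(G[B] + uv), χ_f(G[B]/uv)}. Here G[A] and G[B] denote the induced subgraphs of G on A and on B; G[B] + uv is G[B] with the edge uv added; and G[B]/uv is the graph obtained from G[B] by identifying u and v, i.e., the graph on B \ {v} in which two distinct vertices x, y are adjacent iff either xy is an edge of G, or x = u and yv is an edge of G, or y = u and xv is an edge of G. -/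
open SimpleGraph Finset

lemma exists_perm_single {α : Type*} [Fintype α] [DecidableEq α]
    {s₁ s₂ : Finset α} (h : s₁.card = s₂.card) :
    ∃ σ : Equiv.Perm α, ∀ x, σ x ∈ s₂ ↔ x ∈ s₁ := by
  classical
  have e : {x // x ∈ s₁} ≃ {x // x ∈ s₂} := Finset.equivOfCardEq h
  refine ⟨e.extendSubtype, fun x => ?_⟩
  constructor
  · intro hx
    by_contra hx1
    exact (e.extendSubtype_not_mem x hx1) hx
  · intro hx
    exact e.extendSubtype_mem x hx

lemma card_finset_subtype {α : Type*} [DecidableEq α] (p : α → Prop) [DecidablePred p]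
    (s : Finset α) : (s.subtype p).card = (s.filter p).card := by
  simp [Finset.subtype, Finset.card_map, Finset.card_attach]

lemma exists_perm_pair {α : Type*} [Fintype α] [DecidableEq α]
    {s₁ t₁ s₂ t₂ : Finset α} (hs : s₁.card = s₂.card) (ht : t₁.card = t₂.card)
    (hst : (s₁ ∩ t₁).card = (s₂ ∩ t₂).card) :
    ∃ σ : Equiv.Perm α, (∀ x, σ x ∈ s₂ ↔ x ∈ s₁) ∧ (∀ x, σ x ∈ t₂ ↔ x ∈ t₁) := by
  classical
  obtain ⟨σ₁, hσ₁⟩ := exists_perm_single hs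
  set t₁' : Finset α := t₁.image σ₁ with ht₁'
  have hinj : Function.Injective σ₁ := σ₁.injective
  have hmem_t₁' : ∀ x, σ₁ x ∈ t₁' ↔ x ∈ t₁ := by
    intro x
    simp only [ht₁', Finset.mem_image]
    exact ⟨fun ⟨y, hy, hxy⟩ => by rwa [← hinj hxy], fun hx => ⟨x, hx, rfl⟩⟩
  have hct : t₁'.card = t₂.card := by rw [ht₁', Finset.card_image_of_injective _ hinj, ht]
  have hinter : (t₁' ∩ s₂).card = (t₂ ∩ s₂).card := by
    have h1 : t₁' ∩ s₂ = (t₁ ∩ s₁).image σ₁ := by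
      ext x
      simp only [Finset.mem_inter, Finset.mem_image]
      constructor
      · rintro ⟨hx1, hx2⟩
        obtain ⟨y, hy, rfl⟩ := Finset.mem_image.1 hx1
        exact ⟨y, ⟨hy, (hσ₁ y).1 hx2⟩, rfl⟩
      · rintro ⟨y, ⟨hy1, hy2⟩, rfl⟩
        exact ⟨(hmem_t₁' y).2 hy1, (hσ₁ y).2 hy2⟩
    rw [h1, Finset.card_image_of_injective _ hinj, Finset.inter_comm t₁ s₁,
      Finset.inter_comm t₂ s₂, hst]
  -- inside permutation on {x // x ∈ s₂}
  have hin_card : ((t₁'.subtype (· ∈ s₂)).card : ℕ) = (t₂.subtype (· ∈ s₂)).card := by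
    rw [card_finset_subtype, card_finset_subtype, Finset.filter_mem_eq_inter,
      Finset.filter_mem_eq_inter, hinter]
  obtain ⟨πin, hπin⟩ := exists_perm_single (α := {x // x ∈ s₂}) hin_card
  have hout_card : ((t₁'.subtype (¬ · ∈ s₂)).card : ℕ) = (t₂.subtype (¬ · ∈ s₂)).card := by
    rw [card_finset_subtype, card_finset_subtype, ← Finset.sdiff_eq_filter,
      ← Finset.sdiff_eq_filter]
    have h1 := Finset.card_sdiff_add_card_inter t₁' s₂
    have h2 := Finset.card_sdiff_add_card_inter t₂ s₂
    omega
  obtain ⟨πout, hπout⟩ := exists_perm_single (α := {x // ¬ x ∈ s₂}) hout_card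
  set τ : Equiv.Perm α := Equiv.Perm.subtypeCongr πin πout with hτ
  have hτs : ∀ x, τ x ∈ s₂ ↔ x ∈ s₂ := by
    intro x
    by_cases h : x ∈ s₂
    · rw [hτ, Equiv.Perm.subtypeCongr.left_apply (h := h)]
      simpa [h] using (πin ⟨x, h⟩).2
    · rw [hτ, Equiv.Perm.subtypeCongr.right_apply (h := h)]
      simpa [h] using (πout ⟨x, h⟩).2
  have hτt : ∀ x, τ x ∈ t₂ ↔ x ∈ t₁' := by
    intro x
    by_cases h : x ∈ s₂
    · rw [hτ, Equiv.Perm.subtypeCongr.left_apply (h := h)]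
      have := hπin ⟨x, h⟩
      simp only [Finset.mem_subtype] at this
      exact this
    · rw [hτ, Equiv.Perm.subtypeCongr.right_apply (h := h)]
      have := hπout ⟨x, h⟩
      simp only [Finset.mem_subtype] at this
      exact this
  refine ⟨σ₁.trans τ, fun x => ?_, fun x => ?_⟩
  · show τ (σ₁ x) ∈ s₂ ↔ x ∈ s₁
    rw [hτs, hσ₁]
  · show τ (σ₁ x) ∈ t₂ ↔ x ∈ t₁
    rw [hτt, hmem_t₁']

/-- Generalized coloring with arbitrary palette type. -/
def IsCol {V β : Type*} (G : SimpleGraph V) (b : ℕ) (c : V → Finset β) : Prop :=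
  (∀ x, (c x).card = b) ∧ ∀ x y, G.Adj x y → Disjoint (c x) (c y)

lemma isCol_map {V β γ : Type*} {G : SimpleGraph V} {b : ℕ} {c : V → Finset β}
    (h : IsCol G b c) (f : β ↪ γ) : IsCol G b (fun x => (c x).map f) :=
  ⟨fun x => by rw [Finset.card_map]; exact h.1 x,
   fun x y hxy => by rw [Finset.disjoint_map]; exact h.2 x y hxy⟩

lemma hasAbColoring_of_isCol {V β : Type*} [Fintype β] {G : SimpleGraph V} {a b : ℕ}
    (hcard : Fintype.card β ≤ a) {c : V → Finset β} (h : IsCol G b c) :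
    HasAbColoring G a b := by
  classical
  let f : β ↪ Fin a := (Fintype.equivFin β).toEmbedding.trans (Fin.castLEEmb hcard)
  exact ⟨fun x => (c x).map f, (isCol_map h f).1, (isCol_map h f).2⟩

lemma exists_hasAbColoring {V : Type*} [Fintype V] (G : SimpleGraph V) :
    ∃ a b : ℕ, 0 < a ∧ 0 < b ∧ HasAbColoring G a b := by
  classical
  refine ⟨Fintype.card V + 1, 1, Nat.succ_pos _, Nat.one_pos, ?_⟩
  have h : IsCol G 1 (fun x : V => ({some x} : Finset (Option V))) := by
    refine ⟨fun x => Finset.card_singleton _, fun x y hxy => ?_⟩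
    rw [Finset.disjoint_singleton]
    simp only [ne_eq, Option.some.injEq]
    exact hxy.ne
  exact hasAbColoring_of_isCol (by simp [Fintype.card_option]) h

lemma isCol_prod {V β : Type*} {G : SimpleGraph V} {b : ℕ} {c : V → Finset β} (n : ℕ)
    (h : IsCol G b c) :
    IsCol G (n * b) (fun x => (Finset.univ : Finset (Fin n)) ×ˢ c x) := by
  constructor
  · intro x
    rw [Finset.card_product, Finset.card_univ, Fintype.card_fin, h.1 x]
  · intro x y hxy
    rw [Finset.disjoint_left]
    rintro ⟨i, z⟩ hz hz'
    rw [Finset.mem_product] at hz hz'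
    exact (Finset.disjoint_left.1 (h.2 x y hxy)) hz.2 hz'.2

lemma isCol_disjSum {V β γ : Type*} {G : SimpleGraph V} {b b' : ℕ}
    {c : V → Finset β} {d : V → Finset γ} (h : IsCol G b c) (h' : IsCol G b' d) :
    IsCol G (b + b') (fun x => (c x).disjSum (d x)) := by
  constructor
  · intro x
    rw [Finset.card_disjSum, h.1 x, h'.1 x]
  · intro x y hxy
    rw [Finset.disjoint_left]
    rintro (z | z) hz hz' <;>
      simp only [Finset.inl_mem_disjSum, Finset.inr_mem_disjSum] at hz hz'
    · exact (Finset.disjoint_left.1 (h.2 x y hxy)) hz hz'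
    · exact (Finset.disjoint_left.1 (h'.2 x y hxy)) hz hz'

lemma prod_univ_inter {β : Type*} [DecidableEq β] (n : ℕ) (s t : Finset β) :
    ((Finset.univ : Finset (Fin n)) ×ˢ s) ∩ (Finset.univ ×ˢ t) = Finset.univ ×ˢ (s ∩ t) := by
  ext ⟨i, z⟩
  simp [Finset.mem_product]

lemma disjSum_inter' {β γ : Type*} [DecidableEq β] [DecidableEq γ]
    (s s' : Finset β) (t t' : Finset γ) :
    (s.disjSum t) ∩ (s'.disjSum t') = (s ∩ s').disjSum (t ∩ t') := by
  ext (z | z) <;> simp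

lemma glue_main {V : Type*} [Fintype V] (G : SimpleGraph V) (A B : Set V) (u v : V)
    (huv : u ≠ v) (hu : u ∈ B) (hv : v ∈ B) (huA : u ∈ A) (hvA : v ∈ A)
    (hUnion : A ∪ B = Set.univ)
    (hsub : ∀ x, x ∈ A → x ∈ B → x = u ∨ x = v)
    (hedge : ∀ x y, G.Adj x y → (x ∈ A ∧ y ∈ A) ∨ (x ∈ B ∧ y ∈ B))
    (hnadj : ¬ G.Adj u v)
    {a₁ b₁ a₂ b₂ a₃ b₃ : ℕ} (ha₁ : 0 < a₁) (hb₁ : 0 < b₁) (hb₂ : 0 < b₂) (hb₃ : 0 < b₃)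
    (h₁ : HasAbColoring (G.induce A) a₁ b₁)
    (h₂ : HasAbColoring (G.induce B ⊔ SimpleGraph.fromEdgeSet
      {s((⟨u, hu⟩ : B), (⟨v, hv⟩ : B))}) a₂ b₂)
    (h₃ : HasAbColoring (SimpleGraph.fromRel
      (fun (x y : ↥(B \ {v})) => G.Adj ↑x ↑y ∨ (↑x = u ∧ G.Adj ↑y v))) a₃ b₃) :
    ∃ a b : ℕ, 0 < a ∧ 0 < b ∧ HasAbColoring G a b ∧
      (a : ℝ)/b ≤ max ((a₁:ℝ)/b₁) (max ((a₂:ℝ)/b₂) ((a₃:ℝ)/b₃)) := by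
  classical
  obtain ⟨c₁, hc₁card, hc₁adj⟩ := h₁
  obtain ⟨c₂, hc₂card, hc₂adj⟩ := h₂
  obtain ⟨c₃', hc₃card, hc₃adj⟩ := h₃
  set uA : ↥A := ⟨u, huA⟩
  set vA : ↥A := ⟨v, hvA⟩
  set uB : ↥B := ⟨u, hu⟩
  set vB : ↥B := ⟨v, hv⟩
  set t : ℕ := (c₁ uA ∩ c₁ vA).card with ht_def
  have ht : t ≤ b₁ := by
    rw [ht_def, ← hc₁card uA]
    exact Finset.card_le_card Finset.inter_subset_left
  set N : ℕ := b₂ * b₃ with hN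
  set p : ℕ := b₃ * (b₁ - t) with hp
  set q : ℕ := b₂ * t with hq
  have hpq : p * b₂ + q * b₃ = N * b₁ := by
    have h1 : (b₁ - t) + t = b₁ := by omega
    calc p * b₂ + q * b₃ = b₂ * b₃ * ((b₁ - t) + t) := by rw [hp, hq]; ring
    _ = N * b₁ := by rw [h1, hN]
  -- c₂ is a coloring of `G.induce B` with disjoint sets at u, v
  have hc₂adj' : ∀ x y : ↥B, (G.induce B).Adj x y → Disjoint (c₂ x) (c₂ y) :=
    fun x y hxy => hc₂adj x y ((sup_adj _ _ _ _).mpr (Or.inl hxy))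
  have huvB : uB ≠ vB := fun h => huv (congrArg Subtype.val h)
  have hc₂uv : Disjoint (c₂ uB) (c₂ vB) := by
    refine hc₂adj uB vB ((sup_adj _ _ _ _).mpr (Or.inr ?_))
    rw [fromEdgeSet_adj]
    exact ⟨Set.mem_singleton _, huvB⟩
  -- extend c₃' to B, giving a coloring of `G.induce B` with equal sets at u, v
  have huBv : u ∈ B \ ({v} : Set V) := ⟨hu, by simpa using huv⟩
  set c₃ : ↥B → Finset (Fin a₃) :=
    fun x => if hx : (x : V) = v then c₃' ⟨u, huBv⟩ else c₃' ⟨x, ⟨x.2, hx⟩⟩ with hc₃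
  have hc₃card' : ∀ x, (c₃ x).card = b₃ := by
    intro x
    simp only [hc₃]
    by_cases hx : (x : V) = v <;> simp [hx, hc₃card]
  have hc₃uv : c₃ uB = c₃ vB := by
    simp [hc₃, uB, vB, huv]
  have hc₃adj' : ∀ x y : ↥B, (G.induce B).Adj x y → Disjoint (c₃ x) (c₃ y) := by
    intro x y hxy
    have hadj : G.Adj (x : V) (y : V) := hxy
    have hne : (x : V) ≠ (y : V) := hadj.ne
    simp only [hc₃]
    by_cases hxv : (x : V) = v
    · rw [dif_pos hxv, dif_neg (fun h => hne (hxv.trans h.symm))]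
      have h1 : G.Adj (y : V) v := by rw [← hxv]; exact hadj.symm
      refine hc₃adj _ _ ?_
      rw [fromRel_adj]
      refine ⟨fun h => ?_, Or.inl (Or.inr ⟨rfl, h1⟩)⟩
      have h2 : u = (y : V) := Subtype.mk_eq_mk.mp h
      exact hnadj (h2 ▸ h1 : G.Adj u v)
    · rw [dif_neg hxv]
      by_cases hyv : (y : V) = v
      · rw [dif_pos hyv]
        have h1 : G.Adj (x : V) v := by rw [← hyv]; exact hadj
        refine hc₃adj _ _ ?_
        rw [fromRel_adj]
        refine ⟨fun h => ?_, Or.inr (Or.inr ⟨rfl, h1⟩)⟩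
        have h2 : (x : V) = u := Subtype.mk_eq_mk.mp h
        exact hnadj (h2 ▸ h1 : G.Adj u v)
      · rw [dif_neg hyv]
        refine hc₃adj _ _ ?_
        rw [fromRel_adj]
        exact ⟨fun h => hne (Subtype.mk_eq_mk.mp h), Or.inl (Or.inl hadj)⟩
  -- combined colorings
  set cA : ↥A → Finset (Fin N × Fin a₁) := fun x => Finset.univ ×ˢ c₁ x with hcA
  have hcAcol : IsCol (G.induce A) (N * b₁) cA := isCol_prod N ⟨hc₁card, hc₁adj⟩
  set cB : ↥B → Finset ((Fin p × Fin a₂) ⊕ (Fin q × Fin a₃)) :=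
    fun x => ((Finset.univ : Finset (Fin p)) ×ˢ c₂ x).disjSum
      ((Finset.univ : Finset (Fin q)) ×ˢ c₃ x) with hcB
  have hcBcol : IsCol (G.induce B) (p * b₂ + q * b₃) cB :=
    isCol_disjSum (isCol_prod p ⟨hc₂card, hc₂adj'⟩) (isCol_prod q ⟨hc₃card', hc₃adj'⟩)
  -- overlaps
  have hcAuv : (cA uA ∩ cA vA).card = N * t := by
    simp only [hcA]
    rw [prod_univ_inter, Finset.card_product, Finset.card_univ, Fintype.card_fin, ht_def]
  have hcBuv : (cB uB ∩ cB vB).card = N * t := by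
    simp only [hcB]
    rw [disjSum_inter', prod_univ_inter, prod_univ_inter, Finset.card_disjSum,
      Finset.disjoint_iff_inter_eq_empty.1 hc₂uv, ← hc₃uv, Finset.inter_self,
      Finset.product_empty, Finset.card_empty, Finset.card_product, Finset.card_univ,
      Fintype.card_fin, hc₃card' uB]
    rw [hq]; ring
  -- embed into a common palette
  set a : ℕ := max (N * a₁) (p * a₂ + q * a₃) with ha
  set embA : Fin N × Fin a₁ ↪ Fin a :=
    (finProdFinEquiv.toEmbedding).trans (Fin.castLEEmb (le_max_left _ _)) with hembA
  set embB : (Fin p × Fin a₂) ⊕ (Fin q × Fin a₃) ↪ Fin a :=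
    ((Equiv.sumCongr finProdFinEquiv finProdFinEquiv).toEmbedding).trans
      ((finSumFinEquiv.toEmbedding).trans (Fin.castLEEmb (le_max_right _ _))) with hembB
  set dA : ↥A → Finset (Fin a) := fun x => (cA x).map embA with hdA
  set dB : ↥B → Finset (Fin a) := fun x => (cB x).map embB with hdB
  have hdAcol : IsCol (G.induce A) (N * b₁) dA := isCol_map hcAcol embA
  have hdBcol : IsCol (G.induce B) (p * b₂ + q * b₃) dB := isCol_map hcBcol embB
  have hdAuv : (dA uA ∩ dA vA).card = N * t := by
    simp only [hdA]
    rw [← Finset.map_inter, Finset.card_map, hcAuv]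
  have hdBuv : (dB uB ∩ dB vB).card = N * t := by
    simp only [hdB]
    rw [← Finset.map_inter, Finset.card_map, hcBuv]
  -- match the two colorings at u and v
  obtain ⟨σ, hσu, hσv⟩ := exists_perm_pair (s₁ := dB uB) (t₁ := dB vB)
    (s₂ := dA uA) (t₂ := dA vA)
    (by rw [hdBcol.1 uB, hdAcol.1 uA, hpq]) (by rw [hdBcol.1 vB, hdAcol.1 vA, hpq])
    (by rw [hdBuv, hdAuv])
  set dB' : ↥B → Finset (Fin a) := fun x => (dB x).map σ.toEmbedding with hdB'
  have hdB'col : IsCol (G.induce B) (p * b₂ + q * b₃) dB' := isCol_map hdBcol σ.toEmbedding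
  have himg : ∀ (s₁ : Finset (Fin a)) (s₂ : Finset (Fin a)),
      (∀ x, σ x ∈ s₂ ↔ x ∈ s₁) → s₁.card = s₂.card → s₁.map σ.toEmbedding = s₂ := by
    intro s₁ s₂ hmem hcard
    refine Finset.eq_of_subset_of_card_le ?_ (by rw [Finset.card_map, hcard])
    intro y hy
    rw [Finset.mem_map] at hy
    obtain ⟨z, hz, rfl⟩ := hy
    exact (hmem z).2 hz
  have hmatchu : dB' uB = dA uA := by
    simp only [hdB']
    exact himg _ _ hσu (by rw [hdBcol.1 uB, hdAcol.1 uA, hpq])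
  have hmatchv : dB' vB = dA vA := by
    simp only [hdB']
    exact himg _ _ hσv (by rw [hdBcol.1 vB, hdAcol.1 vA, hpq])
  -- glue
  have hB : ∀ x : V, x ∉ A → x ∈ B := by
    intro x hx
    have : x ∈ A ∪ B := hUnion ▸ Set.mem_univ x
    exact this.resolve_left hx
  set c : V → Finset (Fin a) :=
    fun x => if hx : x ∈ A then dA ⟨x, hx⟩ else dB' ⟨x, hB x hx⟩ with hc
  have hkey : ∀ (x : V) (hxA : x ∈ A) (hxB : x ∈ B), dA ⟨x, hxA⟩ = dB' ⟨x, hxB⟩ := by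
    intro x hxA hxB
    rcases hsub x hxA hxB with rfl | rfl
    · exact hmatchu.symm
    · exact hmatchv.symm
  have hcval : ∀ (x : V) (hxB : x ∈ B), c x = dB' ⟨x, hxB⟩ := by
    intro x hxB
    simp only [hc]
    by_cases hxA : x ∈ A
    · rw [dif_pos hxA]; exact hkey x hxA hxB
    · rw [dif_neg hxA]
  have hcol : IsAbColoring G a (N * b₁) c := by
    constructor
    · intro x
      simp only [hc]
      by_cases hx : x ∈ A
      · rw [dif_pos hx]; exact hdAcol.1 _
      · rw [dif_neg hx, hdB'col.1, hpq]
    · intro x y hxy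
      rcases hedge x y hxy with ⟨hxA, hyA⟩ | ⟨hxB, hyB⟩
      · simp only [hc]
        rw [dif_pos hxA, dif_pos hyA]
        exact hdAcol.2 ⟨x, hxA⟩ ⟨y, hyA⟩ hxy
      · rw [hcval x hxB, hcval y hyB]
        exact hdB'col.2 ⟨x, hxB⟩ ⟨y, hyB⟩ hxy
  refine ⟨a, N * b₁, lt_of_lt_of_le (by positivity) (le_max_left _ _), by positivity,
    ⟨c, hcol⟩, ?_⟩
  -- the ratio bound
  set r : ℝ := max ((a₁:ℝ)/b₁) (max ((a₂:ℝ)/b₂) ((a₃:ℝ)/b₃)) with hr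
  have hb₁' : (0:ℝ) < b₁ := by exact_mod_cast hb₁
  have hb₂' : (0:ℝ) < b₂ := by exact_mod_cast hb₂
  have hb₃' : (0:ℝ) < b₃ := by exact_mod_cast hb₃
  have hNb : (0:ℝ) < (N * b₁ : ℕ) := by
    have : 0 < N * b₁ := by positivity
    exact_mod_cast this
  rw [div_le_iff₀ hNb]
  have h1 : (a₁ : ℝ) ≤ r * b₁ := by
    have := le_max_left ((a₁:ℝ)/b₁) (max ((a₂:ℝ)/b₂) ((a₃:ℝ)/b₃))
    rw [div_le_iff₀ hb₁'] at this
    exact this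
  have h2 : (a₂ : ℝ) ≤ r * b₂ := by
    have := (le_max_left ((a₂:ℝ)/b₂) ((a₃:ℝ)/b₃)).trans
      (le_max_right ((a₁:ℝ)/b₁) (max ((a₂:ℝ)/b₂) ((a₃:ℝ)/b₃)))
    rw [div_le_iff₀ hb₂'] at this
    exact this
  have h3 : (a₃ : ℝ) ≤ r * b₃ := by
    have := (le_max_right ((a₂:ℝ)/b₂) ((a₃:ℝ)/b₃)).trans
      (le_max_right ((a₁:ℝ)/b₁) (max ((a₂:ℝ)/b₂) ((a₃:ℝ)/b₃)))
    rw [div_le_iff₀ hb₃'] at this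
    exact this
  have hamax : (a : ℝ) = max ((N * a₁ : ℕ) : ℝ) ((p * a₂ + q * a₃ : ℕ) : ℝ) := by
    rw [ha]; push_cast; rfl
  rw [hamax]
  have hpq' : ((p * b₂ + q * b₃ : ℕ) : ℝ) = ((N * b₁ : ℕ) : ℝ) := by exact_mod_cast hpq
  have hp0 : (0:ℝ) ≤ (p : ℝ) := Nat.cast_nonneg p
  have hq0 : (0:ℝ) ≤ (q : ℝ) := Nat.cast_nonneg q
  have hN0 : (0:ℝ) ≤ (N : ℝ) := Nat.cast_nonneg N
  refine max_le ?_ ?_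
  · push_cast
    nlinarith [mul_le_mul_of_nonneg_left h1 hN0]
  · rw [← hpq']
    push_cast
    nlinarith [mul_le_mul_of_nonneg_left h2 hp0, mul_le_mul_of_nonneg_left h3 hq0]

lemma fracSet_nonempty {V : Type*} [Fintype V] (G : SimpleGraph V) :
    {x : ℝ | ∃ a b : ℕ, 0 < a ∧ 0 < b ∧ x = (a : ℝ) / (b : ℝ) ∧ HasAbColoring G a b}.Nonempty := by
  obtain ⟨a, b, ha, hb, hcol⟩ := exists_hasAbColoring G
  exact ⟨(a : ℝ)/b, a, b, ha, hb, rfl, hcol⟩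

lemma fracSet_bddBelow {V : Type*} (G : SimpleGraph V) :
    BddBelow {x : ℝ | ∃ a b : ℕ, 0 < a ∧ 0 < b ∧ x = (a : ℝ) / (b : ℝ) ∧ HasAbColoring G a b} := by
  refine ⟨0, fun x hx => ?_⟩
  obtain ⟨a, b, _, _, rfl, _⟩ := hx
  positivity

/-- Cut lemma, non-edge case: if `A ∪ B = V(G)`, `A ∩ B = {u, v}`, every edge of `G` lies
within `A` or within `B`, and `uv ∉ E(G)`, then
`χ_f(G) ≤ max {χ_f(G[A]), χ_f(G[B] + uv), χ_f(G[B]/uv)}`. -/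
theorem stmt_14 {V : Type*} [Fintype V] (G : SimpleGraph V) (A B : Set V) (u v : V)
    (huv : u ≠ v) (hu : u ∈ B) (hv : v ∈ B)
    (hUnion : A ∪ B = Set.univ) (hInter : A ∩ B = {u, v})
    (hedge : ∀ x y, G.Adj x y → (x ∈ A ∧ y ∈ A) ∨ (x ∈ B ∧ y ∈ B))
    (hnadj : ¬ G.Adj u v) :
    fracChromatic G ≤
      max (fracChromatic (G.induce A))
        (max (fracChromatic (G.induce B ⊔ SimpleGraph.fromEdgeSet {s((⟨u, hu⟩ : B), (⟨v, hv⟩ : B))}))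
             (fracChromatic (SimpleGraph.fromRel
               (fun (x y : ↥(B \ {v})) => G.Adj ↑x ↑y ∨ (↑x = u ∧ G.Adj ↑y v))))) := by
  classical
  have huA : u ∈ A := by
    have h : u ∈ A ∩ B := by rw [hInter]; exact Set.mem_insert _ _
    exact h.1
  have hvA : v ∈ A := by
    have h : v ∈ A ∩ B := by rw [hInter]; exact Set.mem_insert_of_mem _ rfl
    exact h.1
  have hsub : ∀ x, x ∈ A → x ∈ B → x = u ∨ x = v := by
    intro x hxA hxB
    have h : x ∈ A ∩ B := ⟨hxA, hxB⟩
    rw [hInter] at h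
    simpa using h
  haveI : Fintype ↥A := Fintype.ofFinite _
  haveI : Fintype ↥B := Fintype.ofFinite _
  haveI : Fintype ↥(B \ ({v} : Set V)) := Fintype.ofFinite _
  set GA := G.induce A with hGA
  set GB2 := G.induce B ⊔ SimpleGraph.fromEdgeSet {s((⟨u, hu⟩ : B), (⟨v, hv⟩ : B))} with hGB2
  set GB3 := SimpleGraph.fromRel
    (fun (x y : ↥(B \ {v})) => G.Adj ↑x ↑y ∨ (↑x = u ∧ G.Adj ↑y v)) with hGB3
  refine le_of_forall_pos_le_add (fun ε hε => ?_)
  obtain ⟨x₁, hx₁S, hx₁lt⟩ := Real.lt_sInf_add_pos (fracSet_nonempty GA) hε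
  obtain ⟨x₂, hx₂S, hx₂lt⟩ := Real.lt_sInf_add_pos (fracSet_nonempty GB2) hε
  obtain ⟨x₃, hx₃S, hx₃lt⟩ := Real.lt_sInf_add_pos (fracSet_nonempty GB3) hε
  obtain ⟨a₁, b₁, ha₁, hb₁, hx₁eq, hcol₁⟩ := hx₁S
  obtain ⟨a₂, b₂, ha₂, hb₂, hx₂eq, hcol₂⟩ := hx₂S
  obtain ⟨a₃, b₃, ha₃, hb₃, hx₃eq, hcol₃⟩ := hx₃S
  obtain ⟨a, b, hapos, hbpos, hcol, hle⟩ := glue_main G A B u v huv hu hv huA hvA hUnion hsub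
    hedge hnadj ha₁ hb₁ hb₂ hb₃ hcol₁ hcol₂ hcol₃
  have hmem : (a : ℝ)/b ∈ {x : ℝ | ∃ a b : ℕ, 0 < a ∧ 0 < b ∧ x = (a : ℝ) / (b : ℝ) ∧
      HasAbColoring G a b} := ⟨a, b, hapos, hbpos, rfl, hcol⟩
  have h0 : fracChromatic G ≤ (a : ℝ)/b := csInf_le (fracSet_bddBelow G) hmem
  have h1 : max ((a₁:ℝ)/b₁) (max ((a₂:ℝ)/b₂) ((a₃:ℝ)/b₃)) ≤
      max (fracChromatic GA) (max (fracChromatic GB2) (fracChromatic GB3)) + ε := by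
    rw [← hx₁eq, ← hx₂eq, ← hx₃eq]
    have e1 : max (fracChromatic GA) (max (fracChromatic GB2) (fracChromatic GB3)) + ε =
        max (fracChromatic GA + ε)
          (max (fracChromatic GB2 + ε) (fracChromatic GB3 + ε)) := by
      rw [max_add_add_right, max_add_add_right]
    rw [e1]
    exact max_le_max hx₁lt.le (max_le_max hx₂lt.le hx₃lt.le)
  exact h0.trans (hle.trans h1)
end
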